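/- Every neighborhood in ∂DL_2(q) of a point of C_0^i (a class of rays that ascend forever in T_i) contains the entire set C_{k,∞}^{1-i} for some k, i.e., all classes that descend at least k edges in T_{1-i} before turning. -/

import Mathlib

/-- A vertex of the (q+1)-regular tree with a distinguished end, in the
horocyclic model: a height `k ∈ ℤ` together with a finitely supported
labelling of the levels strictly below `k`. -/
structure TreeVert (q : ℕ) where
  height : ℤ
  labels : ℤ → ℕ
  labels_lt : ∀ n, labels n = 0 ∨ labels n < q
  supp_below : ∀ n, height ≤ n → labels n = 0
  fin_supp : (Function.support labels).Finite

namespace DL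

variable {q d : ℕ}

/-- `v` is a child of `u` (one step further from the distinguished end). -/
abbrev treeAdjUp (u v : TreeVert q) : Prop :=
  v.height = u.height + 1 ∧ ∀ n, n ≠ u.height → v.labels n = u.labels n

/-- The (q+1)-regular tree. -/
def TreeGraph (q : ℕ) : SimpleGraph (TreeVert q) where
  Adj u v := treeAdjUp u v ∨ treeAdjUp v u
  symm := ⟨fun u v h => Or.symm h⟩
  loopless := by
    constructor
    intro u h
    rcases h with ⟨h1, _⟩ | ⟨h1, _⟩ <;> omega

/-- The base vertex of the tree. -/
def treeOrigin (q : ℕ) : TreeVert q :=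
  ⟨0, fun _ => 0, fun _ => Or.inl rfl, fun _ _ => rfl, by simp⟩

/-- Vertices of the Diestel–Leader graph `DL_d(q)`:
`d`-tuples of tree vertices whose heights sum to zero. -/
def DLVert (d q : ℕ) : Type :=
  {x : Fin d → TreeVert q // (∑ i, (x i).height) = 0}

/-- The Diestel–Leader graph `DL_d(q)`: an edge ascends in one tree and
descends in another, all other coordinates being fixed. -/
def DLGraph (d q : ℕ) : SimpleGraph (DLVert d q) where
  Adj v w := ∃ i j : Fin d, i ≠ j ∧ treeAdjUp (v.1 i) (w.1 i) ∧ treeAdjUp (w.1 j) (v.1 j) ∧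
      ∀ k : Fin d, k ≠ i → k ≠ j → v.1 k = w.1 k
  symm := by
    constructor
    rintro v w ⟨i, j, hij, h1, h2, h3⟩
    exact ⟨j, i, hij.symm, h2, h1, fun k hk1 hk2 => (h3 k hk2 hk1).symm⟩
  loopless := by
    constructor
    rintro v ⟨i, j, hij, ⟨h1, _⟩, _⟩
    omega

/-- The base point of `DL_d(q)`. -/
def origin (d q : ℕ) : DLVert d q :=
  ⟨fun _ => treeOrigin q, by simp [treeOrigin]⟩

/-- A geodesic ray in `DL_d(q)` : an isometric embedding of `ℕ`. -/
def IsGeodesicRay (γ : ℕ → DLVert d q) : Prop :=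
  ∀ m n : ℕ, m ≤ n → (DLGraph d q).dist (γ m) (γ n) = n - m

/-- Two rays are asymptotic when they stay at uniformly bounded distance. -/
def Asymptotic (γ γ' : ℕ → DLVert d q) : Prop :=
  ∃ C : ℕ, ∀ n : ℕ, (DLGraph d q).dist (γ n) (γ' n) ≤ C

instance : TopologicalSpace (DLVert d q) := ⊥

/-- Geodesic rays emanating from the origin, with the topology of uniform
convergence on compact sets (= pointwise convergence, the vertex set being
discrete). -/
def RaySpace (d q : ℕ) : Type :=
  {γ : ℕ → DLVert d q // IsGeodesicRay γ ∧ γ 0 = origin d q}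

instance : TopologicalSpace (RaySpace d q) := by
  unfold RaySpace; infer_instance

lemma reachable_origin (γ : RaySpace d q) (n : ℕ) :
    (DLGraph d q).Reachable (origin d q) (γ.1 n) := by
  cases n with
  | zero => rw [γ.2.2]
  | succ n =>
    have h := γ.2.1 0 (n + 1) (Nat.zero_le _)
    have hne : (DLGraph d q).dist (γ.1 0) (γ.1 (n + 1)) ≠ 0 := by
      rw [h]; omega
    have := SimpleGraph.Reachable.of_dist_ne_zero hne
    rwa [γ.2.2] at this

/-- Asymptoticity as an equivalence relation on geodesic rays from the origin. -/
def asympSetoid (d q : ℕ) : Setoid (RaySpace d q) where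
  r γ γ' := Asymptotic γ.1 γ'.1
  iseqv := by
    constructor
    · intro γ
      exact ⟨0, fun n => by simp [SimpleGraph.dist_self]⟩
    · rintro γ γ' ⟨C, hC⟩
      exact ⟨C, fun n => by rw [SimpleGraph.dist_comm]; exact hC n⟩
    · rintro a b c ⟨C1, h1⟩ ⟨C2, h2⟩
      refine ⟨C1 + C2, fun n => ?_⟩
      have hab : (DLGraph d q).Reachable (a.1 n) (b.1 n) :=
        (reachable_origin a n).symm.trans (reachable_origin b n)
      have hbc : (DLGraph d q).Reachable (b.1 n) (c.1 n) :=
        (reachable_origin b n).symm.trans (reachable_origin c n)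
      obtain ⟨p, hp⟩ := hab.exists_walk_length_eq_dist
      obtain ⟨p', hp'⟩ := hbc.exists_walk_length_eq_dist
      calc (DLGraph d q).dist (a.1 n) (c.1 n) ≤ (p.append p').length :=
            SimpleGraph.dist_le _
        _ = (DLGraph d q).dist (a.1 n) (b.1 n) + (DLGraph d q).dist (b.1 n) (c.1 n) := by
            rw [SimpleGraph.Walk.length_append, hp, hp']
        _ ≤ C1 + C2 := Nat.add_le_add (h1 n) (h2 n)

/-- The visual boundary of `DL_d(q)`: asymptotic classes of geodesic rays
from the origin, with the quotient topology. -/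
def Boundary (d q : ℕ) : Type := Quotient (asympSetoid d q)

instance : TopologicalSpace (Boundary d q) := by
  unfold Boundary; infer_instance

/-- A ray in `DL_2(q)` descends for exactly `n` steps in tree `i`
(bottoming out at height `-n`), then ascends forever in tree `i`.
For `n = 0` this says the ray ascends forever in tree `i` with no turn. -/
def DescendsExactly (i : Fin 2) (n : ℕ) (γ : ℕ → DLVert 2 q) : Prop :=
  (∀ t : ℕ, t ≤ n → ((γ t).1 i).height = -(t : ℤ)) ∧
  (∀ t : ℕ, n ≤ t → ((γ t).1 i).height = (t : ℤ) - 2 * n)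

/-- The subset `C_n^i` of the boundary: classes of rays bottoming out in
tree `i` after descending exactly `n` edges. -/
def Cset (q : ℕ) (i : Fin 2) (n : ℕ) : Set (Boundary 2 q) :=
  {x | ∃ γ : RaySpace 2 q, Quotient.mk (asympSetoid 2 q) γ = x ∧ DescendsExactly i n γ.1}

/-- Projection of a path in `DL_d(q)` to the `i`-th tree. -/
def proj (i : Fin d) (γ : ℕ → DLVert d q) : ℕ → TreeVert q := fun n => (γ n).1 i

/-- Two (lazy) paths in the tree converge to the same end: both eventually
leave every ball, and they come within a uniformly bounded distance of each
other at arbitrarily late times. -/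
def SameEnd (a b : ℕ → TreeVert q) : Prop :=
  (∀ R : ℕ, ∃ N : ℕ, ∀ n, N ≤ n → R ≤ (TreeGraph q).dist (a 0) (a n)) ∧
  (∀ R : ℕ, ∃ N : ℕ, ∀ n, N ≤ n → R ≤ (TreeGraph q).dist (b 0) (b n)) ∧
  (∃ C : ℕ, ∀ N : ℕ, ∃ m n, N ≤ m ∧ N ≤ n ∧ (TreeGraph q).dist (a m) (b n) ≤ C)

/-- The step from `p m` to `p (m+1)` descends in tree `i`. -/
def StepDown (i : Fin d) (p : ℕ → DLVert d q) (m : ℕ) : Prop :=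
  treeAdjUp ((p (m + 1)).1 i) ((p m).1 i)

/-- The step from `p m` to `p (m+1)` ascends in tree `i`. -/
def StepUp (i : Fin d) (p : ℕ → DLVert d q) (m : ℕ) : Prop :=
  treeAdjUp ((p m).1 i) ((p (m + 1)).1 i)

/-- A turn in tree `i`: a subpath beginning with a descent in `T_i` at step `t`,
ending with an ascent in `T_i` at step `s`, with no intervening step
involving `T_i`. -/
def IsTurn (i : Fin d) (p : ℕ → DLVert d q) (t s : ℕ) : Prop :=
  t < s ∧ StepDown i p t ∧ StepUp i p s ∧
    ∀ m, t < m → m < s → (p (m + 1)).1 i = (p m).1 i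


/-! Write `x = [γ]`. Rays live in a product of discrete spaces, so a neighbourhood of `x` contains
the class of every ray agreeing with `γ` up to some time `m`. Let `δ` bottom out in `T_{1-i}` at
depth `n > m`. Up to time `n` the `T_{1-i}`-coordinates of `γ` and `δ` both descend from the
origin, hence coincide. Combining the `T_i`-coordinate of `γ` up to time `n`, followed by a walk
back down, with the `T_{1-i}`-coordinate of `δ` gives a ray that agrees with `γ` up to time `n`
and with `δ` from time `2n` on. It is geodesic because its `T_{1-i}`-coordinate is that of `δ`,
which turns at depth `n` onto a new branch (a geodesic cannot backtrack) and so is at distance `t`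
from the origin at time `t`. -/

@[ext] theorem _root_.TreeVert.ext {u v : TreeVert q} (hh : u.height = v.height)
    (hl : u.labels = v.labels) : u = v := by
  cases u; cases v; cases hh; cases hl; rfl

def parent (u : TreeVert q) : TreeVert q where
  height := u.height - 1
  labels x := if u.height - 1 ≤ x then 0 else u.labels x
  labels_lt x := by
    split_ifs
    exacts [Or.inl rfl, u.labels_lt x]
  supp_below _ hx := if_pos hx
  fin_supp := u.fin_supp.subset fun x hx => by
    simp only [Function.mem_support] at hx ⊢
    split_ifs at hx
    exacts [absurd rfl hx, hx]

@[simp] theorem parent_height (u : TreeVert q) : (parent u).height = u.height - 1 := rfl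

theorem adjUp_parent (u : TreeVert q) : treeAdjUp (parent u) u := by
  refine ⟨by simp, fun x hx => ?_⟩
  simp only [parent] at hx ⊢
  split_ifs with h
  · exact u.supp_below x (by omega)
  · rfl

theorem eq_parent_of_adjUp {a c : TreeVert q} (h : treeAdjUp a c) : a = parent c := by
  ext1
  · simp [h.1]
  · funext x
    simp only [parent]
    split_ifs with hx
    · exact a.supp_below x (by omega)
    · exact (h.2 x (by omega)).symm

theorem iterate_parent_height (u : TreeVert q) (k : ℕ) :
    (parent^[k] u).height = u.height - k := by
  induction k with
  | zero => simp
  | succ k ih => rw [Function.iterate_succ_apply', parent_height, ih]; push_cast; ring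

theorem iterate_parent_treeOrigin_labels (k : ℕ) (ℓ : ℤ) :
    (parent^[k] (treeOrigin q)).labels ℓ = 0 := by
  induction k with
  | zero => rfl
  | succ k ih => simp [Function.iterate_succ_apply', parent, ih]

theorem eq_of_adjUp_of_labels_eq {u v w : TreeVert q} (hv : treeAdjUp u v) (hw : treeAdjUp u w)
    (h : v.labels u.height = w.labels u.height) : v = w := by
  ext1
  · rw [hv.1, hw.1]
  · funext x
    by_cases hx : x = u.height
    · rwa [hx]
    · rw [hv.2 x hx, hw.2 x hx]

theorem eq_iterate_parent_of_descending {p : ℕ → TreeVert q} {N : ℕ}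
    (h : ∀ t < N, treeAdjUp (p (t + 1)) (p t)) : p N = parent^[N] (p 0) := by
  induction N with
  | zero => rfl
  | succ N ih =>
    rw [Function.iterate_succ_apply', ← ih fun t ht => h t (by omega)]
    exact eq_parent_of_adjUp (h N N.lt_succ_self)

theorem iterate_parent_of_ascending {p : ℕ → TreeVert q} {N : ℕ}
    (h : ∀ t < N, treeAdjUp (p t) (p (t + 1))) : parent^[N] (p N) = p 0 := by
  induction N with
  | zero => rfl
  | succ N ih =>
    rw [Function.iterate_succ_apply, ← eq_parent_of_adjUp (h N N.lt_succ_self)]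
    exact ih fun t ht => h t (by omega)

theorem labels_eq_of_ascending {p : ℕ → TreeVert q} {N : ℕ} {ℓ : ℤ}
    (h : ∀ t ≥ N, treeAdjUp (p t) (p (t + 1)) ∧ ℓ ≠ (p t).height) :
    ∀ t ≥ N, (p t).labels ℓ = (p N).labels ℓ := by
  intro t ht
  induction t, ht using Nat.le_induction with
  | base => rfl
  | succ t ht ih => rw [(h t ht).1.2 ℓ (h t ht).2, ih]

def followThenDescend (p : ℕ → TreeVert q) (n t : ℕ) : TreeVert q :=
  if t ≤ n then p t else parent^[t - n] (p n)

theorem followThenDescend_of_le {p : ℕ → TreeVert q} {n t : ℕ} (ht : t ≤ n) :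
    followThenDescend p n t = p t :=
  if_pos ht

theorem followThenDescend_add (p : ℕ → TreeVert q) (n s : ℕ) :
    followThenDescend p n (n + s) = parent^[s] (p n) := by
  unfold followThenDescend
  split_ifs with h
  · obtain rfl : s = 0 := by omega
    rfl
  · rw [Nat.add_sub_cancel_left]

theorem treeAdjUp_of_adj {u v : TreeVert q} (h : (TreeGraph q).Adj u v)
    (hh : v.height = u.height + 1) : treeAdjUp u v :=
  h.resolve_right fun h' => by have := h'.1; omega

theorem followThenDescend_adj {p : ℕ → TreeVert q} {n : ℕ}
    (hp : ∀ t < n, (TreeGraph q).Adj (p t) (p (t + 1))) (t : ℕ) :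
    (TreeGraph q).Adj (followThenDescend p n t) (followThenDescend p n (t + 1)) := by
  rcases lt_or_ge t n with ht | ht
  · rw [followThenDescend_of_le ht.le, followThenDescend_of_le ht]
    exact hp t ht
  · obtain ⟨s, rfl⟩ := Nat.exists_eq_add_of_le ht
    rw [add_assoc, followThenDescend_add, followThenDescend_add, Function.iterate_succ_apply']
    exact .inr (adjUp_parent _)

theorem height_sub_height_le_length {u v : TreeVert q} (p : (TreeGraph q).Walk u v) :
    v.height - u.height ≤ p.length := by
  induction p with
  | nil => simp
  | cons h _ ih =>
    rw [SimpleGraph.Walk.length_cons]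
    rcases h with h | h <;> · have := h.1; push_cast; omega

/-- A walk joining vertices with different labels at level `ℓ` has to pass through level `ℓ`. -/
theorem height_add_height_le_length_of_labels_ne {u v : TreeVert q}
    (p : (TreeGraph q).Walk u v) {ℓ : ℤ} (hne : u.labels ℓ ≠ v.labels ℓ) :
    (u.height - ℓ) + (v.height - ℓ) ≤ p.length := by
  induction p with
  | nil => exact absurd rfl hne
  | @cons a b c h p ih =>
    rw [SimpleGraph.Walk.length_cons]
    have hab : b.height = a.height + 1 ∨ a.height = b.height + 1 := h.imp (·.1) (·.1)
    by_cases hb : b.labels ℓ = c.labels ℓ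
    · have hlen := height_sub_height_le_length p
      have hℓ : ℓ = a.height ∧ b.height = a.height + 1 ∨
          ℓ = b.height ∧ a.height = b.height + 1 := by
        rcases h with h | h
        · exact .inl ⟨by_contra fun hx => hne (by rw [← h.2 ℓ hx, hb]), h.1⟩
        · exact .inr ⟨by_contra fun hx => hne (by rw [h.2 ℓ hx, hb]), h.1⟩
      push_cast
      omega
    · have := ih hb
      push_cast
      omega

theorem exists_walk_of_adj_chain {V : Type*} {G : SimpleGraph V} {p : ℕ → V}
    (h : ∀ t, G.Adj (p t) (p (t + 1))) {a b : ℕ} (hab : a ≤ b) :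
    ∃ w : G.Walk (p a) (p b), w.length = b - a := by
  induction b, hab using Nat.le_induction with
  | base => exact ⟨.nil, by simp⟩
  | succ b hab ih =>
    obtain ⟨w, hw⟩ := ih
    exact ⟨w.concat (h b), by rw [SimpleGraph.Walk.length_concat, hw]; omega⟩

theorem IsGeodesicRay.adj {γ : ℕ → DLVert d q} (h : IsGeodesicRay γ) (t : ℕ) :
    (DLGraph d q).Adj (γ t) (γ (t + 1)) :=
  SimpleGraph.dist_eq_one_iff_adj.mp (by simpa using h t (t + 1) (by omega))

theorem isGeodesicRay_of_adj {γ : ℕ → DLVert d q} (hadj : ∀ t, (DLGraph d q).Adj (γ t) (γ (t + 1)))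
    (hfar : ∀ t, t ≤ (DLGraph d q).dist (γ 0) (γ t)) : IsGeodesicRay γ := by
  intro a b hab
  obtain ⟨w, hw⟩ := exists_walk_of_adj_chain hadj hab
  obtain ⟨w₀, hw₀⟩ := exists_walk_of_adj_chain hadj a.zero_le
  have hle := SimpleGraph.dist_le w
  have htri := w₀.reachable.dist_triangle_left (γ b)
  have h₀ := SimpleGraph.dist_le w₀
  have := hfar b
  omega

theorem asymptotic_of_eq_of_le {γ δ : ℕ → DLVert d q} (hγ : IsGeodesicRay γ)
    (hδ : IsGeodesicRay δ) {N : ℕ} (h : ∀ t ≥ N, γ t = δ t) : Asymptotic γ δ := by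
  refine ⟨2 * N, fun t => ?_⟩
  rcases le_total N t with hNt | htN
  · simp [h t hNt]
  · obtain ⟨w, -⟩ := exists_walk_of_adj_chain hγ.adj htN
    have htri := w.reachable.dist_triangle_left (δ t)
    rw [hγ t N htN, h N le_rfl, SimpleGraph.dist_comm (u := δ N), hδ t N htN] at htri
    omega

theorem exists_cylinder_subset {V : Set (RaySpace d q)} (hV : IsOpen V) (γ : RaySpace d q)
    (hγ : γ ∈ V) : ∃ m : ℕ, ∀ δ : RaySpace d q, (∀ t ≤ m, δ.1 t = γ.1 t) → δ ∈ V := by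
  obtain ⟨W, hWo, rfl⟩ := isOpen_induced_iff.mp hV
  obtain ⟨I, u, hIu, hsub⟩ := isOpen_pi_iff.mp hWo γ.1 hγ
  refine ⟨I.sup id, fun δ hδ => hsub fun a ha => ?_⟩
  rw [hδ a (Finset.le_sup (f := id) ha)]
  exact (hIu a ha).2

def DLVert.update (v : DLVert d q) (k : Fin d) (u : TreeVert q)
    (hu : u.height = (v.1 k).height) : DLVert d q :=
  ⟨Function.update v.1 k u, by
    convert v.2 using 2 with x
    rcases eq_or_ne x k with rfl | hx <;> simp [*]⟩

section TwoTrees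

variable {i j : Fin 2}

theorem fin_two_eq_or_eq (hij : i ≠ j) (k : Fin 2) : k = i ∨ k = j := by
  omega

theorem DLVert.height_add_height (v : DLVert 2 q) (hij : i ≠ j) :
    (v.1 i).height + (v.1 j).height = 0 := by
  have := v.2
  rw [Fin.sum_univ_two] at this
  fin_cases i <;> fin_cases j <;> simp_all [add_comm]

theorem DLVert.ext_of_ne (hij : i ≠ j) {v w : DLVert 2 q} (hi : v.1 i = w.1 i)
    (hj : v.1 j = w.1 j) : v = w :=
  Subtype.ext <| funext fun k => by rcases fin_two_eq_or_eq hij k with rfl | rfl <;> assumption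

/-- In `DL_2(q)` the height condition forces the two tree steps of an edge to go in opposite
directions, so an edge is the same as a pair of tree edges. -/
theorem dlAdj_iff {v w : DLVert 2 q} :
    (DLGraph 2 q).Adj v w ↔ ∀ k, (TreeGraph q).Adj (v.1 k) (w.1 k) := by
  constructor
  · rintro ⟨i, j, hij, hup, hdown, -⟩ k
    rcases fin_two_eq_or_eq hij k with rfl | rfl
    exacts [.inl hup, .inr hdown]
  · intro h
    have hv := v.height_add_height (zero_ne_one (α := Fin 2))
    have hw := w.height_add_height (zero_ne_one (α := Fin 2))
    have hrest : ∀ k : Fin 2, k ≠ 0 → k ≠ 1 → v.1 k = w.1 k := fun k h0 h1 =>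
      (fin_two_eq_or_eq zero_ne_one k).elim (absurd · h0) (absurd · h1)
    rcases h 0 with h0 | h0
    · exact ⟨0, 1, by decide, h0, treeAdjUp_of_adj (h 1).symm (by have := h0.1; omega), hrest⟩
    · exact ⟨1, 0, by decide, treeAdjUp_of_adj (h 1) (by have := h0.1; omega), h0,
        fun k h1 h0 => hrest k h0 h1⟩

def projHom (k : Fin 2) : DLGraph 2 q →g TreeGraph q where
  toFun v := v.1 k
  map_rel' h := dlAdj_iff.mp h k

theorem adjUp_of_height_succ {ρ : ℕ → DLVert 2 q} (hρ : IsGeodesicRay ρ) {k : Fin 2} {t : ℕ}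
    (h : ((ρ (t + 1)).1 k).height = ((ρ t).1 k).height + 1) :
    treeAdjUp ((ρ t).1 k) ((ρ (t + 1)).1 k) :=
  treeAdjUp_of_adj (dlAdj_iff.mp (hρ.adj t) k) h

theorem adjUp_of_height_pred {ρ : ℕ → DLVert 2 q} (hρ : IsGeodesicRay ρ) {k : Fin 2} {t : ℕ}
    (h : ((ρ t).1 k).height = ((ρ (t + 1)).1 k).height + 1) :
    treeAdjUp ((ρ (t + 1)).1 k) ((ρ t).1 k) :=
  treeAdjUp_of_adj (dlAdj_iff.mp (hρ.adj t) k).symm h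

theorem RaySpace.eq_iterate_parent_treeOrigin (ρ : RaySpace 2 q) {N : ℕ}
    (hρ : ∀ t ≤ N, ((ρ.1 t).1 j).height = -t) {t : ℕ} (ht : t ≤ N) :
    (ρ.1 t).1 j = parent^[t] (treeOrigin q) := by
  have h0 : (ρ.1 0).1 j = treeOrigin q := by rw [ρ.2.2]; rfl
  rw [← h0]
  exact eq_iterate_parent_of_descending (p := fun s => (ρ.1 s).1 j) fun s hs =>
    adjUp_of_height_pred ρ.2.1 (by rw [hρ s (by omega), hρ (s + 1) (by omega)]; push_cast; ring)

theorem RaySpace.iterate_parent_eq_treeOrigin (ρ : RaySpace 2 q) (hij : i ≠ j) {N : ℕ}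
    (hρ : ∀ t ≤ N, ((ρ.1 t).1 j).height = -t) : parent^[N] ((ρ.1 N).1 i) = treeOrigin q := by
  have hi : ∀ t ≤ N, ((ρ.1 t).1 i).height = t := fun t ht => by
    have := (ρ.1 t).height_add_height hij
    rw [hρ t ht] at this
    omega
  have h0 : (ρ.1 0).1 i = treeOrigin q := by rw [ρ.2.2]; rfl
  rw [← h0]
  exact iterate_parent_of_ascending (p := fun s => (ρ.1 s).1 i) fun s hs =>
    adjUp_of_height_succ ρ.2.1 (by rw [hi s (by omega), hi (s + 1) (by omega)]; push_cast; ring)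

theorem DescendsExactly.height_of_ne (hij : i ≠ j) {n : ℕ} {δ : ℕ → DLVert 2 q}
    (hδ : DescendsExactly j n δ) :
    (∀ t ≤ n, ((δ t).1 i).height = t) ∧ ∀ t ≥ n, ((δ t).1 i).height = 2 * n - t := by
  constructor <;> intro t ht <;> have := (δ t).height_add_height hij
  · rw [hδ.1 t ht] at this; omega
  · rw [hδ.2 t ht] at this; omega

theorem DescendsExactly.eq_iterate_parent (hij : i ≠ j) {n : ℕ} {δ : ℕ → DLVert 2 q}
    (hδ : DescendsExactly j n δ) (hgeo : IsGeodesicRay δ) (s : ℕ) :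
    (δ (n + s)).1 i = parent^[s] ((δ n).1 i) :=
  eq_iterate_parent_of_descending (p := fun s => (δ (n + s)).1 i) fun t _ =>
    adjUp_of_height_pred (t := n + t) hgeo (by
      rw [(hδ.height_of_ne hij).2 _ (by omega), (hδ.height_of_ne hij).2 _ (by omega)]
      push_cast; ring)

/-- A geodesic ray cannot step back to where it was two steps before, so after bottoming out
its `T_j`-coordinate climbs onto a branch other than the one it came down. -/
theorem DescendsExactly.labels_ne_zero (hij : i ≠ j) {n : ℕ} (hn : 0 < n) {δ : RaySpace 2 q}
    (hδ : DescendsExactly j n δ.1) {t : ℕ} (ht : n < t) : ((δ.1 t).1 j).labels (-n) ≠ 0 := by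
  have hgeo := δ.2.1
  obtain ⟨hi₁, hi₂⟩ := hδ.height_of_ne hij
  have hup : ∀ t ≥ n, treeAdjUp ((δ.1 t).1 j) ((δ.1 (t + 1)).1 j) := fun t ht =>
    adjUp_of_height_succ hgeo (by rw [hδ.2 t ht, hδ.2 (t + 1) (by omega)]; push_cast; ring)
  have hturn : ((δ.1 (n + 1)).1 j).labels (-n) ≠ 0 := by
    intro h0
    have hn' : n - 1 + 1 = n := Nat.sub_add_cancel hn
    have hdown : treeAdjUp ((δ.1 n).1 j) ((δ.1 (n - 1)).1 j) := by
      have := adjUp_of_height_pred hgeo (t := n - 1) (k := j)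
        (by rw [hδ.1 _ (by omega), hδ.1 _ (by omega)]; push_cast; omega)
      rwa [hn'] at this
    have hj : (δ.1 (n + 1)).1 j = (δ.1 (n - 1)).1 j := by
      refine eq_of_adjUp_of_labels_eq (hup n le_rfl) hdown ?_
      rw [hδ.1 n le_rfl, h0, δ.eq_iterate_parent_treeOrigin hδ.1 (by omega : n - 1 ≤ n),
        iterate_parent_treeOrigin_labels]
    have hi : (δ.1 (n + 1)).1 i = (δ.1 (n - 1)).1 i := by
      have hup' := adjUp_of_height_succ hgeo (t := n - 1) (k := i)
        (by rw [hi₁ _ (by omega), hi₁ _ (by omega)]; push_cast; omega)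
      rw [hn'] at hup'
      rw [eq_parent_of_adjUp hup', eq_parent_of_adjUp (adjUp_of_height_pred hgeo (t := n)
        (by rw [hi₁ n le_rfl, hi₂ (n + 1) (by omega)]; push_cast; ring))]
    have := hgeo (n - 1) (n + 1) (by omega)
    rw [DLVert.ext_of_ne hij hi hj, SimpleGraph.dist_self] at this
    omega
  rwa [labels_eq_of_ascending (p := fun t => (δ.1 t).1 j) (N := n + 1)
    (fun t ht => ⟨hup t (by omega), by rw [hδ.2 t (by omega)]; omega⟩) t ht]

theorem DescendsExactly.le_dist_origin (hij : i ≠ j) {n : ℕ} (hn : 0 < n) {δ : RaySpace 2 q}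
    (hδ : DescendsExactly j n δ.1) {v : DLVert 2 q} (hv : (DLGraph 2 q).Reachable (origin 2 q) v)
    {t : ℕ} (hvt : v.1 j = (δ.1 t).1 j) : t ≤ (DLGraph 2 q).dist (origin 2 q) v := by
  obtain ⟨w, hw⟩ := hv.exists_walk_length_eq_dist
  obtain ⟨p, hp⟩ : ∃ p : (TreeGraph q).Walk (treeOrigin q) ((δ.1 t).1 j),
      p.length = (DLGraph 2 q).dist (origin 2 q) v :=
    ⟨(w.map (projHom j)).copy rfl hvt,
      (SimpleGraph.Walk.length_copy _ _ _).trans <| (SimpleGraph.Walk.length_map _ _).trans hw⟩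
  rw [← hp]
  have h0 : (treeOrigin q).height = 0 := rfl
  rcases le_or_gt t n with htn | hnt
  · have := height_sub_height_le_length p.reverse
    rw [SimpleGraph.Walk.length_reverse, hδ.1 t htn] at this
    omega
  · have := height_add_height_le_length_of_labels_ne p (ℓ := -n)
      fun h => hδ.labels_ne_zero hij hn hnt h.symm
    rw [hδ.2 t hnt.le] at this
    omega

theorem exists_ray_eqOn_asymptotic (hij : i ≠ j) {n : ℕ} (hn : 0 < n) {γ δ : RaySpace 2 q}
    (hγ : DescendsExactly i 0 γ.1) (hδ : DescendsExactly j n δ.1) :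
    ∃ f : RaySpace 2 q, (∀ t ≤ n, f.1 t = γ.1 t) ∧ Asymptotic f.1 δ.1 := by
  have hγi : ∀ t, ((γ.1 t).1 i).height = t := fun t => by simpa using hγ.2 t t.zero_le
  have hγj : ∀ t ≤ n, ((γ.1 t).1 j).height = -t := fun t _ => by
    simpa using (hγ.height_of_ne hij.symm).2 t t.zero_le
  obtain ⟨hδi₁, hδi₂⟩ := hδ.height_of_ne hij
  have hg : ∀ t, (followThenDescend (fun t => (γ.1 t).1 i) n t).height =
      ((δ.1 t).1 i).height := fun t => by
    rcases le_or_gt t n with ht | ht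
    · rw [followThenDescend_of_le ht, hγi, hδi₁ t ht]
    · obtain ⟨s, rfl⟩ := Nat.exists_eq_add_of_le ht.le
      rw [followThenDescend_add, iterate_parent_height, hγi, hδi₂ _ ht.le]
      push_cast; ring
  let f : ℕ → DLVert 2 q := fun t => (δ.1 t).update i _ (hg t)
  have hfi : ∀ t, (f t).1 i = followThenDescend (fun t => (γ.1 t).1 i) n t :=
    fun t => Function.update_self ..
  have hfj : ∀ t, (f t).1 j = (δ.1 t).1 j := fun t => Function.update_of_ne hij.symm ..
  have hfγ : ∀ t ≤ n, f t = γ.1 t := fun t ht =>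
    DLVert.ext_of_ne hij (by rw [hfi, followThenDescend_of_le ht])
      (by rw [hfj, δ.eq_iterate_parent_treeOrigin hδ.1 ht, γ.eq_iterate_parent_treeOrigin hγj ht])
  have hf0 : f 0 = origin 2 q := (hfγ 0 n.zero_le).trans γ.2.2
  have hadj : ∀ t, (DLGraph 2 q).Adj (f t) (f (t + 1)) := fun t => by
    refine dlAdj_iff.mpr fun k => ?_
    rcases fin_two_eq_or_eq hij k with rfl | rfl
    · rw [hfi, hfi]
      exact followThenDescend_adj (fun t _ => dlAdj_iff.mp (γ.2.1.adj t) k) t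
    · rw [hfj, hfj]
      exact dlAdj_iff.mp (δ.2.1.adj t) k
  have hfgeo : IsGeodesicRay f := isGeodesicRay_of_adj hadj fun t => by
    obtain ⟨w, -⟩ := exists_walk_of_adj_chain hadj t.zero_le
    rw [hf0] at w ⊢
    exact hδ.le_dist_origin hij hn w.reachable (hfj t)
  refine ⟨⟨f, hfgeo, hf0⟩, hfγ, asymptotic_of_eq_of_le hfgeo δ.2.1 (N := 2 * n) fun t ht => ?_⟩
  refine DLVert.ext_of_ne hij ?_ (hfj t)
  obtain ⟨s, rfl⟩ : ∃ s, t = n + (s + n) := ⟨t - 2 * n, by omega⟩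
  rw [hfi, followThenDescend_add, hδ.eq_iterate_parent hij δ.2.1, Function.iterate_add_apply,
    Function.iterate_add_apply, δ.iterate_parent_eq_treeOrigin hij hδ.1,
    γ.iterate_parent_eq_treeOrigin hij hγj]

end TwoTrees

theorem nbhd_contains_tail_general {q : ℕ} (i : Fin 2) (x : Boundary 2 q)
    (hx : x ∈ Cset q i 0) (U : Set (Boundary 2 q)) (hU : IsOpen U) (hxU : x ∈ U) :
    ∃ k : ℕ, 0 < k ∧ ∀ n : ℕ, k ≤ n → Cset q (1 - i) n ⊆ U := by
  obtain ⟨γ, rfl, hγ⟩ := hx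
  obtain ⟨m, hm⟩ := exists_cylinder_subset (hU.preimage continuous_quotient_mk') γ hxU
  refine ⟨m + 1, m.succ_pos, fun n hn _ ⟨δ, hδx, hδ⟩ => ?_⟩
  obtain ⟨f, hfγ, hfδ⟩ :=
    exists_ray_eqOn_asymptotic (by fin_cases i <;> decide) (by omega) hγ hδ
  rw [← hδx, ← Quotient.sound hfδ]
  exact hm f fun t ht => hfγ t (by omega)

/-- every open neighborhood of a point of `C_0^i` contains all
of `C_{k,∞}^{1-i} = ⋃_{n ≥ k} C_n^{1-i}` for some `k`. -/
theorem nbhd_contains_tail {q : ℕ} (hq : 2 ≤ q) (i : Fin 2) (x : Boundary 2 q)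
    (hx : x ∈ Cset q i 0) (U : Set (Boundary 2 q)) (hU : IsOpen U) (hxU : x ∈ U) :
    ∃ k : ℕ, 0 < k ∧ ∀ n : ℕ, k ≤ n → Cset q (1 - i) n ⊆ U :=
  nbhd_contains_tail_general i x hx U hU hxU

end DL
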